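/- Let C be a unital algebra over ℚ and let X, Y ∈ C be such that a := YX − XY commutes with both X and Y. Then in the formal power series ring C[[s,t]] in two commuting central variables s, t one has exp(tY)·exp(sX) = exp(sX)·exp(tY)·exp(a·st), where exp(tY) := ∑_{n≥0} Y^n t^n/n!, exp(sX) := ∑_{n≥0} X^n s^n/n!, and exp(a·st) := ∑_{n≥0} a^n (st)^n/n!. -/

import Mathlib

/-
Write `a = ⁅Y, X⁆`. Left multiplication by `Y` is the sum of right multiplication by `Y`
and `ad Y = ⁅Y, ·⁆`, two commuting operators. Since `a` commutes with `X` and `Y`, `ad Y`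
acts on powers of `X` like `a • d/dX`:
`(ad Y)^[k] (X ^ m) = m (m - 1) ⋯ (m - k + 1) • X ^ (m - k) * a ^ k`.
The binomial theorem for the two operators then gives the normal-ordering formula
`Y ^ n * X ^ m = ∑ₖ (n choose k) m (m - 1) ⋯ (m - k + 1) • X ^ (m - k) * Y ^ (n - k) * a ^ k`,
which after division by `n! m!` is the equality of the coefficients of `s ^ m t ^ n`
on both sides.
-/

noncomputable section

open scoped Classical

/-- The formal power series `exp(T·Y) = ∑_{n ≥ 0} Y^n T^n / n!` in `C[[s,t]]`, where `T` is
the variable of index `v : Fin 2` (so `v = 0` gives `exp(sY)` and `v = 1` gives `exp(tY)`):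
its coefficient on a monomial supported only on `v`, with exponent `k` at `v`, is `Y^k/k!`,
and all other coefficients vanish. -/
def expVar {C : Type*} [Ring C] [Algebra ℚ C] (v : Fin 2) (Y : C) :
    MvPowerSeries (Fin 2) C :=
  fun e => if ∀ w, w ≠ v → e w = 0 then (((e v).factorial : ℚ)⁻¹) • Y ^ (e v) else 0

/-- The formal power series `exp(a·st) = ∑_{n ≥ 0} a^n (st)^n / n!` in `C[[s,t]]`: its
coefficient on `s^k t^k` is `a^k/k!`, and all coefficients on `s^k t^l` with `k ≠ l`
vanish. -/
def expDiag {C : Type*} [Ring C] [Algebra ℚ C] (a : C) : MvPowerSeries (Fin 2) C :=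
  fun e => if e 0 = e 1 then (((e 0).factorial : ℚ)⁻¹) • a ^ (e 0) else 0

open Finset Nat

theorem inv_factorial_mul_choose_mul_descFactorial (m n k : ℕ) (hkm : k ≤ m) (hkn : k ≤ n) :
    (n ! : ℚ)⁻¹ * (m ! : ℚ)⁻¹ * (n.choose k * m.descFactorial k : ℕ) =
      ((m - k)! : ℚ)⁻¹ * ((n - k)! : ℚ)⁻¹ * (k ! : ℚ)⁻¹ := by
  have hm : ((m - k)! : ℚ) * m.descFactorial k = m ! := by
    exact_mod_cast factorial_mul_descFactorial hkm
  have hD : (m.descFactorial k : ℚ) ≠ 0 := by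
    exact_mod_cast (descFactorial_eq_zero_iff_lt.not.mpr (not_lt.mpr hkm))
  rw [Nat.cast_mul, Nat.cast_choose ℚ hkn, ← hm]
  field_simp

section Commutator
variable {A : Type*} [Ring A]

theorem lie_mul_of_commute {Y W : A} (h : Commute Y W) (Z : A) : ⁅Y, Z * W⁆ = ⁅Y, Z⁆ * W := by
  simp only [Ring.lie_def, sub_mul, mul_assoc, ← h.eq]

theorem lie_pow_of_commute_lie {X Y : A} (hX : Commute ⁅Y, X⁆ X) (j : ℕ) :
    ⁅Y, X ^ j⁆ = j • (X ^ (j - 1) * ⁅Y, X⁆) := by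
  induction j with
  | zero => simp [Ring.lie_def]
  | succ j ih =>
    have hsplit : ⁅Y, X ^ (j + 1)⁆ = ⁅Y, X ^ j⁆ * X + X ^ j * ⁅Y, X⁆ := by
      simp only [Ring.lie_def, pow_succ]; noncomm_ring
    rcases j with _ | j
    · simp
    · rw [hsplit, ih, smul_mul_assoc, mul_assoc, hX.eq, ← mul_assoc, ← pow_succ]
      simp only [add_tsub_cancel_right, succ_nsmul (X ^ (j + 1) * ⁅Y, X⁆)]

theorem iterate_lie_pow {X Y : A} (hX : Commute ⁅Y, X⁆ X) (hY : Commute ⁅Y, X⁆ Y) (m k : ℕ) :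
    (⁅Y, ·⁆)^[k] (X ^ m) = m.descFactorial k • (X ^ (m - k) * ⁅Y, X⁆ ^ k) := by
  induction k with
  | zero => simp
  | succ k ih =>
    have lie_nsmul (c : ℕ) (Z : A) : ⁅Y, c • Z⁆ = c • ⁅Y, Z⁆ := by
      simp only [Ring.lie_def, mul_smul_comm, smul_mul_assoc, smul_sub]
    rw [Function.iterate_succ_apply', ih, lie_nsmul, lie_mul_of_commute (hY.pow_left k).symm,
      lie_pow_of_commute_lie hX, smul_mul_assoc, mul_assoc, ← pow_succ' ⁅Y, X⁆, smul_smul,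
      descFactorial_succ, mul_comm, Nat.sub_sub]

theorem pow_mul_pow_eq_sum_antidiagonal {X Y : A} (hX : Commute ⁅Y, X⁆ X)
    (hY : Commute ⁅Y, X⁆ Y) (m n : ℕ) :
    Y ^ n * X ^ m = ∑ p ∈ antidiagonal n,
      (n.choose p.1 * m.descFactorial p.1) • (X ^ (m - p.1) * Y ^ p.2 * ⁅Y, X⁆ ^ p.1) := by
  set adY : Module.End ℤ A := LinearMap.mulLeft ℤ Y - LinearMap.mulRight ℤ Y
  have hadY : ∀ k Z, (adY ^ k) Z = (⁅Y, ·⁆)^[k] Z := fun k Z => by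
    rw [Module.End.pow_apply]; rfl
  have hcomm : Commute adY (LinearMap.mulRight ℤ Y) :=
    (LinearMap.commute_mulLeft_right Y Y).sub_left (Commute.refl _)
  calc Y ^ n * X ^ m = (LinearMap.mulLeft ℤ Y ^ n) (X ^ m) := by simp
    _ = ((adY + LinearMap.mulRight ℤ Y) ^ n) (X ^ m) := by rw [sub_add_cancel]
    _ = _ := by
      rw [hcomm.add_pow', LinearMap.sum_apply]
      refine sum_congr rfl fun p _ => ?_
      rw [LinearMap.smul_apply, (hcomm.pow_pow _ _).eq, Module.End.mul_apply, hadY,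
        iterate_lie_pow hX hY, LinearMap.pow_mulRight, LinearMap.mulRight_apply, smul_mul_assoc,
        smul_smul, mul_assoc, mul_assoc, (hY.pow_pow _ _).eq]

variable [Algebra ℚ A]

theorem inv_factorial_smul_pow_mul_eq_sum {X Y : A} (hX : Commute ⁅Y, X⁆ X)
    (hY : Commute ⁅Y, X⁆ Y) (m n : ℕ) :
    ((n ! : ℚ)⁻¹ • Y ^ n) * ((m ! : ℚ)⁻¹ • X ^ m) =
      ∑ k ∈ range (min m n + 1), ((m - k)! : ℚ)⁻¹ • X ^ (m - k) *
        (((n - k)! : ℚ)⁻¹ • Y ^ (n - k)) * ((k ! : ℚ)⁻¹ • ⁅Y, X⁆ ^ k) := by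
  rw [smul_mul_smul, pow_mul_pow_eq_sum_antidiagonal hX hY,
    Nat.sum_antidiagonal_eq_sum_range_succ_mk, smul_sum,
    ← sum_subset (range_subset_range.mpr (succ_le_succ (min_le_right m n)))]
  · refine sum_congr rfl fun k hk => ?_
    obtain ⟨hkm, hkn⟩ : k ≤ m ∧ k ≤ n := by simpa [Nat.lt_succ_iff] using hk
    rw [← Nat.cast_smul_eq_nsmul ℚ, smul_smul,
      inv_factorial_mul_choose_mul_descFactorial m n k hkm hkn, smul_mul_smul, smul_mul_smul]
  · intro k hkn hk
    have hmk : m < k := by simp only [mem_range] at hkn hk; omega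
    rw [descFactorial_eq_zero_iff_lt.mpr hmk, mul_zero, zero_smul, smul_zero]

end Commutator

section PowerSeries
variable {C : Type*} [Ring C] [Algebra ℚ C]

theorem coeff_expVar (v : Fin 2) (Y : C) (e : Fin 2 →₀ ℕ) :
    MvPowerSeries.coeff e (expVar v Y) =
      if ∀ w, w ≠ v → e w = 0 then ((e v)! : ℚ)⁻¹ • Y ^ e v else 0 := rfl

theorem coeff_expDiag (a : C) (e : Fin 2 →₀ ℕ) :
    MvPowerSeries.coeff e (expDiag a) = if e 0 = e 1 then ((e 0)! : ℚ)⁻¹ • a ^ e 0 else 0 := rfl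

theorem Fin.two_eq_or_eq {v w : Fin 2} (hvw : v ≠ w) (u : Fin 2) : u = v ∨ u = w := by
  fin_cases u <;> fin_cases v <;> fin_cases w <;> simp_all

theorem coeff_expVar_mul_expVar {v w : Fin 2} (hvw : v ≠ w) (X Y : C) (e : Fin 2 →₀ ℕ) :
    MvPowerSeries.coeff e (expVar v X * expVar w Y) =
      (((e v)! : ℚ)⁻¹ • X ^ e v) * (((e w)! : ℚ)⁻¹ • Y ^ e w) := by
  have hsupp {v w : Fin 2} (hvw : v ≠ w) (f : Fin 2 →₀ ℕ) :
      (∀ u, u ≠ v → f u = 0) ↔ f w = 0 := by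
    refine ⟨fun h => h w hvw.symm, fun h u hu => ?_⟩
    rcases Fin.two_eq_or_eq hvw u with rfl | rfl
    exacts [absurd rfl hu, h]
  rw [MvPowerSeries.coeff_mul,
    sum_eq_single_of_mem (Finsupp.single v (e v), Finsupp.single w (e w))]
  · simp [coeff_expVar, hsupp hvw, hsupp hvw.symm, hvw, hvw.symm]
  · rw [HasAntidiagonal.mem_antidiagonal]
    ext u
    rcases Fin.two_eq_or_eq hvw u with rfl | rfl <;> simp [hvw, hvw.symm]
  · rintro ⟨p, q⟩ hpq hne
    rw [HasAntidiagonal.mem_antidiagonal] at hpq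
    rw [coeff_expVar, coeff_expVar]
    split_ifs with hp hq
    · refine absurd ?_ hne
      rw [hsupp hvw] at hp
      rw [hsupp hvw.symm] at hq
      subst hpq
      ext u <;> rcases Fin.two_eq_or_eq hvw u with rfl | rfl <;> simp [hp, hq, hvw, hvw.symm]
    all_goals simp only [mul_zero, zero_mul]

theorem coeff_mul_expDiag (P : MvPowerSeries (Fin 2) C) (a : C) (e : Fin 2 →₀ ℕ) :
    MvPowerSeries.coeff e (P * expDiag a) = ∑ k ∈ range (min (e 0) (e 1) + 1),
      MvPowerSeries.coeff (e - (Finsupp.single 0 k + Finsupp.single 1 k)) P *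
        ((k ! : ℚ)⁻¹ • a ^ k) := by
  set d : ℕ → Fin 2 →₀ ℕ := fun k => Finsupp.single 0 k + Finsupp.single 1 k
  have hd (k : ℕ) (u : Fin 2) : d k u = k := by fin_cases u <;> simp [d]
  have hd_le {k : ℕ} (hk : k ∈ range (min (e 0) (e 1) + 1)) : d k ≤ e := by
    intro u; fin_cases u <;> simp only [mem_range] at hk <;> simp [hd] <;> omega
  rw [MvPowerSeries.coeff_mul]
  refine (sum_of_injOn (fun k => (e - d k, d k)) ?_ ?_ ?_ ?_).symm
  · intro k _ l _ h
    simpa [hd] using congr_arg (fun p => p.2 0) h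
  · intro k hk
    simp [tsub_add_cancel_of_le (hd_le hk)]
  · rintro ⟨p, q⟩ hpq hnot
    rw [coeff_expDiag, if_neg, mul_zero]
    intro hq
    rw [HasAntidiagonal.mem_antidiagonal] at hpq
    dsimp only at hpq hq
    have hdq : d (q 0) = q := by
      ext u; fin_cases u <;> simp [hd, hq]
    refine hnot ⟨q 0, ?_, ?_⟩
    · have h0 := congr_arg (· 0) hpq
      have h1 := congr_arg (· 1) hpq
      simp only [Finsupp.coe_add, Pi.add_apply] at h0 h1
      simp only [coe_range, Set.mem_Iio]
      omega
    · simp [hdq, ← hpq]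
  · intro k _
    simp [coeff_expDiag, hd, d]

end PowerSeries

/-- Let `C` be a unital `ℚ`-algebra and `X, Y ∈ C` such that `a := YX − XY` commutes with
both `X` and `Y`. Then in `C[[s,t]]` (with `s` the variable of index `0` and `t` the
variable of index `1`) one has `exp(tY)·exp(sX) = exp(sX)·exp(tY)·exp(a·st)`. -/
theorem exp_commutation {C : Type*} [Ring C] [Algebra ℚ C] (X Y : C)
    (hX : Commute (Y * X - X * Y) X) (hY : Commute (Y * X - X * Y) Y) :
    expVar 1 Y * expVar 0 X = expVar 0 X * expVar 1 Y * expDiag (Y * X - X * Y) := by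
  ext e
  rw [coeff_expVar_mul_expVar (by decide), coeff_mul_expDiag,
    inv_factorial_smul_pow_mul_eq_sum (X := X) (Y := Y) hX hY, Ring.lie_def]
  refine sum_congr rfl fun k _ => ?_
  rw [coeff_expVar_mul_expVar (by decide)]
  simp
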